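/- arXiv:0907.1318 — 2 statements merged into one kernel-verified Lean document; each statement's English description precedes it below -/
import Mathlib

section
/- Let f : ℝ₊ → ℂ be measurable and suppose there exist constants K > 0 and α > 1/2 such that for every r > 0, the weighted L² bound ∫₀^∞ (r t e^{−r t})² |f(t)|² dt ≤ K²/(1 + log⁺ r)^{2α} holds. Then for every t₀ > 0, ∫₀^{t₀} |f(t)|² dt ≤ K'² for a constant K' depending only on K, α and t₀ (in particular f ∈ L²(0, t₀)). -/
/-!
On the dyadic piece `(1/s, 2/s]` the weight `s t e^{-st}` is at least `e^{-2}`, so the hypothesis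
at `r = s` bounds `∫ |f|²` over that piece by `e⁴ K² / (1 + log⁺ s)^{2α}`. For `s = 2ⁿ · 2/t₀`
the pieces cover `(0, t₀]` and `log⁺ s` grows linearly in `n`, so these bounds are summable
because `2α > 1`.
-/

open MeasureTheory Filter Real Set

theorem exp_neg_two_le_mul_exp_neg {x : ℝ} (h₁ : 1 ≤ x) (h₂ : x ≤ 2) :
    exp (-2) ≤ x * exp (-x) :=
  calc exp (-2) = 1 * exp (-2) := (one_mul _).symm
    _ ≤ x * exp (-x) := by gcongr

theorem summable_inv_one_add_max_rpow {c d p : ℝ} (hc : 0 < c) (hp : 1 < p) :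
    Summable fun n : ℕ => ((1 + max (c * n + d) 0) ^ p)⁻¹ := by
  refine Summable.of_norm_bounded_eventually_nat
    ((summable_nat_rpow_inv.2 hp).mul_left (((c / 2) ^ p)⁻¹)) ?_
  filter_upwards [tendsto_natCast_atTop_atTop.eventually_ge_atTop (-2 * d / c),
    eventually_ge_atTop 1] with n hn hn₁
  have hn₀ : (0 : ℝ) < n := by exact_mod_cast hn₁
  have hcn : c / 2 * n ≤ 1 + max (c * n + d) 0 := by
    rw [div_le_iff₀ hc] at hn
    linarith [le_max_left (c * n + d) 0]
  rw [norm_inv, norm_of_nonneg (by positivity)]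
  calc ((1 + max (c * n + d) 0) ^ p)⁻¹ ≤ ((c / 2 * n) ^ p)⁻¹ := by gcongr
    _ = ((c / 2) ^ p)⁻¹ * ((n : ℝ) ^ p)⁻¹ := by
      rw [mul_rpow (by positivity) hn₀.le, mul_inv]

theorem summable_inv_one_add_max_log_two_pow_mul_rpow {r p : ℝ} (hr : 0 < r) (hp : 1 < p) :
    Summable fun n : ℕ => ((1 + max (log (2 ^ n * r)) 0) ^ p)⁻¹ := by
  have hlog (n : ℕ) : log (2 ^ n * r) = log 2 * n + log r := by
    rw [log_mul (by positivity) hr.ne', log_pow, mul_comm]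
  simpa only [hlog] using summable_inv_one_add_max_rpow (d := log r) (log_pos one_lt_two) hp

theorem Ioc_zero_subset_iUnion_Ioc_dyadic {r : ℝ} (hr : 0 < r) :
    Ioc 0 (2 / r) ⊆ ⋃ n : ℕ, Ioc (1 / (2 ^ n * r)) (2 / (2 ^ n * r)) := by
  rintro t ⟨ht₀, ht⟩
  have hrt : 0 < r * t := mul_pos hr ht₀
  have hx : 1 ≤ 2 / (r * t) := by
    rw [le_div_iff₀ hrt]; rw [le_div_iff₀ hr] at ht; linarith
  obtain ⟨n, hlo, hhi⟩ := exists_nat_pow_near hx one_lt_two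
  refine mem_iUnion.2 ⟨n, ?_, ?_⟩
  · rw [div_lt_iff₀ hrt, pow_succ] at hhi
    rw [div_lt_iff₀ (by positivity)]; linarith
  · rw [le_div_iff₀ hrt] at hlo
    rw [le_div_iff₀ (by positivity)]; linarith

theorem lintegral_Ioc_zero_le_tsum_dyadic {r : ℝ} (hr : 0 < r) (g : ℝ → ENNReal) :
    ∫⁻ t in Ioc 0 (2 / r), g t ≤ ∑' n : ℕ, ∫⁻ t in Ioc (1 / (2 ^ n * r)) (2 / (2 ^ n * r)), g t :=
  (lintegral_mono_set (Ioc_zero_subset_iUnion_Ioc_dyadic hr)).trans (lintegral_iUnion_le _ _)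

theorem lintegral_Ioc_le_exp_four_mul_lintegral_weighted {E : Type*} [NormedAddCommGroup E]
    (f : ℝ → E) {s : ℝ} (hs : 0 < s) :
    ∫⁻ t in Ioc (1 / s) (2 / s), ENNReal.ofReal (‖f t‖ ^ 2) ≤
      ENNReal.ofReal (exp 4) *
        ∫⁻ t in Ioi 0, ENNReal.ofReal ((s * t * exp (-(s * t))) ^ 2 * ‖f t‖ ^ 2) := by
  rw [← lintegral_const_mul' _ _ ENNReal.ofReal_ne_top]
  refine (setLIntegral_mono' measurableSet_Ioc fun t ht => ?_).trans
    (lintegral_mono_set fun t ht => (lt_trans (by positivity) ht.1 : 0 < t))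
  rw [← ENNReal.ofReal_mul (exp_pos 4).le]
  refine ENNReal.ofReal_le_ofReal ?_
  have h₁ : 1 ≤ s * t := by rw [← div_le_iff₀' hs]; exact ht.1.le
  have h₂ : s * t ≤ 2 := by rw [← le_div_iff₀' hs]; exact ht.2
  have hweight : 1 ≤ exp 4 * (s * t * exp (-(s * t))) ^ 2 := by
    calc (1 : ℝ) = exp 4 * exp (-2) ^ 2 := by rw [← exp_nat_mul, ← exp_add]; norm_num
      _ ≤ exp 4 * (s * t * exp (-(s * t))) ^ 2 := by
        gcongr; exact exp_neg_two_le_mul_exp_neg h₁ h₂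
  nlinarith [sq_nonneg ‖f t‖]

theorem stmt2_general (f : ℝ → ℂ) (K α : ℝ) (hα : 1 / 2 < α)
    (h : ∀ r : ℝ, 0 < r →
      (∫⁻ t in Set.Ioi (0 : ℝ),
          ENNReal.ofReal ((r * t * Real.exp (-(r * t))) ^ 2 * ‖f t‖ ^ 2))
        ≤ ENNReal.ofReal (K ^ 2 / (1 + max (Real.log r) 0) ^ (2 * α))) :
    ∀ t₀ : ℝ, 0 < t₀ → ∃ K' : ℝ, 0 < K' ∧
      (∫⁻ t in Set.Ioc (0 : ℝ) t₀, ENNReal.ofReal (‖f t‖ ^ 2))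
        ≤ ENNReal.ofReal (K' ^ 2) := by
  intro t₀ ht₀
  set r := 2 / t₀
  have hr : 0 < r := by positivity
  set b : ℕ → ℝ := fun n => exp 4 * (K ^ 2 / (1 + max (log (2 ^ n * r)) 0) ^ (2 * α))
  have hb₀ (n : ℕ) : 0 ≤ b n := by positivity
  have hb : Summable b :=
    ((summable_inv_one_add_max_log_two_pow_mul_rpow hr (by linarith : 1 < 2 * α)).mul_left
      (exp 4 * K ^ 2)).congr fun n => by ring
  have hpiece (n : ℕ) : ∫⁻ t in Ioc (1 / (2 ^ n * r)) (2 / (2 ^ n * r)),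
      ENNReal.ofReal (‖f t‖ ^ 2) ≤ ENNReal.ofReal (b n) := by
    have hs : 0 < 2 ^ n * r := by positivity
    rw [ENNReal.ofReal_mul (exp_pos 4).le]
    exact (lintegral_Ioc_le_exp_four_mul_lintegral_weighted f hs).trans
      (mul_le_mul_right (h _ hs) _)
  refine ⟨sqrt (∑' n, b n + 1), by positivity, ?_⟩
  rw [sq_sqrt (by positivity), ← div_div_cancel₀ (two_ne_zero : (2 : ℝ) ≠ 0) (b := t₀)]
  calc _ ≤ _ := lintegral_Ioc_zero_le_tsum_dyadic hr _
    _ ≤ ∑' n, ENNReal.ofReal (b n) := ENNReal.tsum_le_tsum hpiece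
    _ = ENNReal.ofReal (∑' n, b n) := (ENNReal.ofReal_tsum_of_nonneg hb₀ hb).symm
    _ ≤ _ := ENNReal.ofReal_le_ofReal (by linarith)

/-- If f satisfies the weighted bounds ∫₀^∞ (r t e^{−rt})² |f t|² dt ≤ K²/(1+log⁺ r)^{2α}
    for all r > 0 with α > 1/2, then f ∈ L²(0,t₀) for every t₀ > 0 with a bound depending
    only on K, α, t₀. -/
theorem stmt2 (f : ℝ → ℂ) (hf : Measurable f) (K α : ℝ) (hK : 0 < K) (hα : 1 / 2 < α)
    (h : ∀ r : ℝ, 0 < r →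
      (∫⁻ t in Set.Ioi (0 : ℝ),
          ENNReal.ofReal ((r * t * Real.exp (-(r * t))) ^ 2 * ‖f t‖ ^ 2))
        ≤ ENNReal.ofReal (K ^ 2 / (1 + max (Real.log r) 0) ^ (2 * α))) :
    ∀ t₀ : ℝ, 0 < t₀ → ∃ K' : ℝ, 0 < K' ∧
      (∫⁻ t in Set.Ioc (0 : ℝ) t₀, ENNReal.ofReal (‖f t‖ ^ 2))
        ≤ ENNReal.ofReal (K' ^ 2) :=
  stmt2_general f K α hα h
end

section
/- Let ω > 0 and 0 < 2α < β ≤ 1, and set â(λ) = λ^{−α}/(ω + λ^{β−α}) on the open right half-plane. Then â is 1-regular: there exists K > 0 such that |λ â'(λ)| ≤ K |â(λ)| for all Re λ > 0. -/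
/-!
On the right half-plane `|arg λ| < π/2`, so `λ^γ` lies in the sector `|arg| ≤ γπ/2` and
`Re (ω + λ^γ) ≥ cos (γπ/2) ‖λ^γ‖` for `ω ≥ 0`. Hence `λ^γ / (ω + λ^γ)` is bounded by
`1 / cos (γπ/2)` when `0 < γ < 1`, and the logarithmic derivative
`λ â'(λ) / â(λ) = -α - γ λ^γ / (ω + λ^γ)`, with `γ = β - α`, is bounded.
-/

open Complex Real

lemma Real.cos_mul_pi_div_two_pos {γ : ℝ} (hγ : |γ| < 1) : 0 < Real.cos (γ * (π / 2)) :=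
  Real.cos_pos_of_mem_Ioo ⟨by nlinarith [pi_pos, abs_lt.1 hγ], by nlinarith [pi_pos, abs_lt.1 hγ]⟩

namespace Complex

lemma norm_cpow_mul_cos_le_re_cpow {z : ℂ} (hz : 0 ≤ z.re) {γ : ℝ} (hγ : |γ| ≤ 2) :
    ‖z ^ (γ : ℂ)‖ * Real.cos (γ * (π / 2)) ≤ (z ^ (γ : ℂ)).re := by
  rw [cpow_ofReal_re, norm_cpow_real]
  have harg : |arg z| ≤ π / 2 := abs_arg_le_pi_div_two_iff.2 hz
  have hsector : |arg z * γ| ≤ |γ| * (π / 2) := by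
    rw [abs_mul, mul_comm]
    exact mul_le_mul_of_nonneg_left harg (abs_nonneg γ)
  have hcos : Real.cos (γ * (π / 2)) ≤ Real.cos (arg z * γ) := by
    rw [← Real.cos_abs (γ * (π / 2)), ← Real.cos_abs (arg z * γ),
      abs_mul, abs_of_pos (by positivity : (0 : ℝ) < π / 2)]
    exact Real.cos_le_cos_of_nonneg_of_le_pi (abs_nonneg _) (by nlinarith [pi_pos]) hsector
  exact mul_le_mul_of_nonneg_left hcos (by positivity)

lemma add_cpow_ofReal_ne_zero {ω : ℝ} (hω : 0 < ω) {z : ℂ} (hz : 0 ≤ z.re) {γ : ℝ}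
    (hγ : |γ| ≤ 1) : (ω : ℂ) + z ^ (γ : ℂ) ≠ 0 := by
  have hcos : 0 ≤ Real.cos (γ * (π / 2)) := by
    rw [← Real.cos_abs, abs_mul, abs_of_pos (by positivity : (0 : ℝ) < π / 2)]
    exact Real.cos_nonneg_of_neg_pi_div_two_le_of_le (by nlinarith [pi_pos, abs_nonneg γ])
      (by nlinarith [pi_pos])
  have hre := norm_cpow_mul_cos_le_re_cpow hz (γ := γ) (by linarith)
  intro h
  have := congrArg re h
  simp only [add_re, ofReal_re, zero_re] at this
  nlinarith [norm_nonneg (z ^ (γ : ℂ))]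

lemma norm_cpow_div_add_cpow_le {ω : ℝ} (hω : 0 ≤ ω) {z : ℂ} (hz : 0 ≤ z.re) {γ : ℝ}
    (hγ : |γ| < 1) :
    ‖z ^ (γ : ℂ) / ((ω : ℂ) + z ^ (γ : ℂ))‖ ≤ 1 / Real.cos (γ * (π / 2)) := by
  have hcos := Real.cos_mul_pi_div_two_pos hγ
  rcases eq_or_ne ((ω : ℂ) + z ^ (γ : ℂ)) 0 with hden | hden
  · rw [hden, div_zero, norm_zero]
    positivity
  have hre := norm_cpow_mul_cos_le_re_cpow hz (γ := γ) (by linarith)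
  have hden_norm : ‖z ^ (γ : ℂ)‖ * Real.cos (γ * (π / 2)) ≤ ‖(ω : ℂ) + z ^ (γ : ℂ)‖ :=
    calc ‖z ^ (γ : ℂ)‖ * Real.cos (γ * (π / 2)) ≤ ω + (z ^ (γ : ℂ)).re := by linarith
      _ = ((ω : ℂ) + z ^ (γ : ℂ)).re := by simp
      _ ≤ ‖(ω : ℂ) + z ^ (γ : ℂ)‖ := re_le_norm _
  rw [norm_div, div_le_div_iff₀ (norm_pos_iff.2 hden) hcos]
  linarith

lemma mul_deriv_cpow_div_add_cpow {a c ω z : ℂ} (hz : z ∈ slitPlane) (hden : ω + z ^ c ≠ 0) :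
    z * deriv (fun w : ℂ => w ^ a / (ω + w ^ c)) z
      = (a - c * (z ^ c / (ω + z ^ c))) * (z ^ a / (ω + z ^ c)) := by
  have hnum := (hasDerivAt_id z).cpow_const (c := a) hz
  have hdenom := ((hasDerivAt_id z).cpow_const (c := c) hz).const_add ω
  have hquot : HasDerivAt (fun w : ℂ => w ^ a / (ω + w ^ c))
      ((a * z ^ (a - 1) * 1 * (ω + z ^ c) - z ^ a * (c * z ^ (c - 1) * 1)) / (ω + z ^ c) ^ 2) z :=
    hnum.div hdenom hden
  rw [hquot.deriv]
  have hz0 : z ≠ 0 := slitPlane_ne_zero hz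
  have hpow_sub_one (b : ℂ) : z ^ (b - 1) = z ^ b / z := by
    rw [cpow_sub _ _ hz0, cpow_one]
  rw [hpow_sub_one, hpow_sub_one]
  field_simp

end Complex

/-- The kernel transform â(λ) = λ^{−α}/(ω + λ^{β−α}) is 1-regular:
    |λ â'(λ)| ≤ K |â(λ)| on the open right half-plane. -/
theorem stmt7 (ω α β : ℝ) (hω : 0 < ω) (hα : 0 < α) (hαβ : 2 * α < β) (hβ : β ≤ 1) :
    ∃ K : ℝ, 0 < K ∧ ∀ z : ℂ, 0 < z.re →
      ‖(z * deriv (fun w : ℂ =>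
          w ^ (-(α : ℂ)) / ((ω : ℂ) + w ^ (((β - α : ℝ) : ℂ)))) z)‖
        ≤ K * ‖(z ^ (-(α : ℂ)) / ((ω : ℂ) + z ^ (((β - α : ℝ) : ℂ))))‖ := by
  set γ : ℝ := β - α
  have hγ : |γ| < 1 := abs_lt.2 ⟨by linarith, by linarith⟩
  have hγ0 : 0 < γ := by linarith
  have hcos := Real.cos_mul_pi_div_two_pos hγ
  refine ⟨α + γ / Real.cos (γ * (π / 2)), by positivity, fun z hz => ?_⟩
  rw [mul_deriv_cpow_div_add_cpow (Or.inl hz)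
    (add_cpow_ofReal_ne_zero hω hz.le hγ.le), norm_mul]
  gcongr
  have hq := norm_cpow_div_add_cpow_le hω.le hz.le hγ
  calc ‖-(α : ℂ) - γ * (z ^ (γ : ℂ) / ((ω : ℂ) + z ^ (γ : ℂ)))‖
      ≤ ‖(α : ℂ)‖ + ‖(γ : ℂ)‖ * ‖z ^ (γ : ℂ) / ((ω : ℂ) + z ^ (γ : ℂ))‖ :=
        (norm_sub_le _ _).trans_eq (by rw [norm_neg, norm_mul])
    _ ≤ α + γ * (1 / Real.cos (γ * (π / 2))) := by
        rw [norm_real, norm_real, Real.norm_of_nonneg hα.le, Real.norm_of_nonneg hγ0.le]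
        gcongr
    _ = α + γ / Real.cos (γ * (π / 2)) := by rw [mul_one_div]
end
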